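/- arXiv:1104.1361 — 3 statements merged into one kernel-verified Lean document; each statement's English description precedes it below -/
import Mathlib

section
/- Let G = Z_{p^r} ⋊_α Z_{q^s} with ord(α) = q^t. If a = u p^i with u ∈ (Z_{p^r})^*, and b = v q^j with v ∈ (Z_{q^s})^* and j ≥ t, then ⟨x^a y^b⟩ = ⟨x^{p^i} y^{q^j}⟩, and this subgroup has order p^{r-i} q^{s-j}. -/
/-!
Since `α` has order `q ^ t` and `t ≤ j`, conjugation by `y ^ q ^ j` is trivial on `x`, so
`a = x ^ p ^ i` and `b = y ^ q ^ j` commute; their orders `p ^ (r - i)` and `q ^ (s - j)` are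
coprime, so `a * b` has order `p ^ (r - i) * q ^ (s - j)`. By the Chinese remainder theorem
there is `k ≡ u [MOD p ^ r]`, `k ≡ v [MOD q ^ s]`, so `x ^ (u * p ^ i) * y ^ (v * q ^ j)` is
`(a * b) ^ k` with `k` coprime to the order of `a * b`, hence generates the same cyclic subgroup.
-/

open Subgroup

section

variable {G : Type*} [Group G]

theorem conj_pow_eq_pow_pow {x y : G} {m : ℕ} (h : y * x * y⁻¹ = x ^ m) (n : ℕ) :
    y ^ n * x * (y ^ n)⁻¹ = x ^ m ^ n := by
  induction n with
  | zero => simp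
  | succ n ih =>
    calc y ^ (n + 1) * x * (y ^ (n + 1))⁻¹ = y * (y ^ n * x * (y ^ n)⁻¹) * y⁻¹ := by group
      _ = x ^ m ^ (n + 1) := by rw [ih, ← conj_pow, h, ← pow_mul, pow_succ']

theorem commute_pow_of_conj_eq_pow {x y : G} {m n : ℕ} (h : y * x * y⁻¹ = x ^ m)
    (hmn : m ^ n ≡ 1 [MOD orderOf x]) : Commute x (y ^ n) := by
  have hconj : y ^ n * x * (y ^ n)⁻¹ = x :=
    (conj_pow_eq_pow_pow h n).trans ((pow_eq_pow_iff_modEq.mpr hmn).trans (pow_one x))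
  exact (mul_inv_eq_iff_eq_mul.mp hconj).symm

theorem zpowers_pow_eq_of_coprime {g : G} {k : ℕ} (h : k.Coprime (orderOf g)) :
    zpowers (g ^ k) = zpowers g :=
  le_antisymm (zpowers_le.mpr (pow_mem (mem_zpowers g) k))
    (zpowers_le.mpr (mem_zpowers_pow_iff.mpr h))

theorem Commute.zpowers_pow_mul_pow {a b : G} (hab : Commute a b)
    (hco : (orderOf a).Coprime (orderOf b)) {u v : ℕ} (hu : u.Coprime (orderOf a))
    (hv : v.Coprime (orderOf b)) :
    zpowers (a ^ u * b ^ v) = zpowers (a * b) := by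
  obtain ⟨k, hka, hkb⟩ := Nat.chineseRemainder hco u v
  have hk : (a * b) ^ k = a ^ u * b ^ v := by
    rw [hab.mul_pow, pow_eq_pow_iff_modEq.mpr hka, pow_eq_pow_iff_modEq.mpr hkb]
  have hk_coprime : k.Coprime (orderOf (a * b)) := by
    rw [hab.orderOf_mul_eq_mul_orderOf_of_coprime hco]
    exact Nat.Coprime.mul_right (hka.gcd_eq.trans hu) (hkb.gcd_eq.trans hv)
  rw [← hk, zpowers_pow_eq_of_coprime hk_coprime]

end

theorem ZMod.val_pow_modEq_one {n : ℕ} [NeZero n] {α : (ZMod n)ˣ} {k : ℕ} (h : α ^ k = 1) :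
    (α : ZMod n).val ^ k ≡ 1 [MOD n] := by
  rw [← ZMod.natCast_eq_natCast_iff]
  push_cast [ZMod.natCast_zmod_val]
  rw [← Units.val_pow_eq_pow_val, h, Units.val_one]

theorem orderOf_pow_prime_pow {G : Type*} [Group G] {g : G} {p r i : ℕ} (hp : p.Prime)
    (hg : orderOf g = p ^ r) (hi : i ≤ r) : orderOf (g ^ p ^ i) = p ^ (r - i) := by
  rw [orderOf_pow_of_dvd (pow_ne_zero i hp.ne_zero) (hg ▸ pow_dvd_pow p hi), hg,
    Nat.pow_div hi hp.pos]

theorem stmt_9_general (p q r s t : ℕ) (hp : p.Prime) (hq : q.Prime) (hpq : p ≠ q)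
    (G : Type*) [Group G] (x y : G)
    (α : (ZMod (p ^ r))ˣ) (hα : orderOf α = q ^ t)
    (hx : orderOf x = p ^ r) (hy : orderOf y = q ^ s)
    (hcomm : y * x * y⁻¹ = x ^ ((α : ZMod (p ^ r)).val)) :
    ∀ u v i j : ℕ, IsUnit (u : ZMod (p ^ r)) → IsUnit (v : ZMod (q ^ s)) →
      i ≤ r → t ≤ j → j ≤ s →
      Subgroup.zpowers (x ^ (u * p ^ i) * y ^ (v * q ^ j)) =
          Subgroup.zpowers (x ^ p ^ i * y ^ q ^ j) ∧
        Nat.card (Subgroup.zpowers (x ^ p ^ i * y ^ q ^ j)) = p ^ (r - i) * q ^ (s - j) := by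
  intro u v i j hu hv hir htj hjs
  have : NeZero (p ^ r) := ⟨pow_ne_zero r hp.ne_zero⟩
  have hαj : α ^ q ^ j = 1 := orderOf_dvd_iff_pow_eq_one.mp (hα ▸ pow_dvd_pow q htj)
  have hab : Commute (x ^ p ^ i) (y ^ q ^ j) :=
    (commute_pow_of_conj_eq_pow hcomm (by rw [hx]; exact ZMod.val_pow_modEq_one hαj)).pow_left _
  have hoa := orderOf_pow_prime_pow hp hx hir
  have hob := orderOf_pow_prime_pow hq hy hjs
  have hco : (orderOf (x ^ p ^ i)).Coprime (orderOf (y ^ q ^ j)) := by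
    rw [hoa, hob]
    exact Nat.Coprime.pow _ _ ((Nat.coprime_primes hp hq).mpr hpq)
  have hu' : u.Coprime (orderOf (x ^ p ^ i)) := hoa ▸
    ((ZMod.isUnit_iff_coprime u _).mp hu).coprime_dvd_right (pow_dvd_pow p (r.sub_le i))
  have hv' : v.Coprime (orderOf (y ^ q ^ j)) := hob ▸
    ((ZMod.isUnit_iff_coprime v _).mp hv).coprime_dvd_right (pow_dvd_pow q (s.sub_le j))
  refine ⟨?_, ?_⟩
  · rw [mul_comm u, mul_comm v, pow_mul, pow_mul]
    exact hab.zpowers_pow_mul_pow hco hu' hv'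
  · rw [Nat.card_zpowers, hab.orderOf_mul_eq_mul_orderOf_of_coprime hco, hoa, hob]

theorem stmt_9 (p q r s t : ℕ) (hp : p.Prime) (hq : q.Prime) (hpq : p ≠ q)
    (hpodd : Odd p) (hqodd : Odd q)
    (hr : 0 < r) (hs : 0 < s) (ht : 1 ≤ t) (hts : t ≤ s)
    (G : Type*) [Group G] (x y : G)
    (α : (ZMod (p ^ r))ˣ) (hα : orderOf α = q ^ t)
    (hx : orderOf x = p ^ r) (hy : orderOf y = q ^ s)
    (hcomm : y * x * y⁻¹ = x ^ ((α : ZMod (p ^ r)).val))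
    (hgen : Subgroup.closure {x, y} = ⊤)
    (hcard : Nat.card G = p ^ r * q ^ s) :
    ∀ u v i j : ℕ, IsUnit (u : ZMod (p ^ r)) → IsUnit (v : ZMod (q ^ s)) →
      i ≤ r → t ≤ j → j ≤ s →
      Subgroup.zpowers (x ^ (u * p ^ i) * y ^ (v * q ^ j)) =
          Subgroup.zpowers (x ^ p ^ i * y ^ q ^ j) ∧
        Nat.card (Subgroup.zpowers (x ^ p ^ i * y ^ q ^ j)) = p ^ (r - i) * q ^ (s - j) :=
  stmt_9_general p q r s t hp hq hpq G x y α hα hx hy hcomm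
end

section
/- Let G = Z_{p^r} ⋊_α Z_{q^s} with ord(α) = q^t and let H = ⟨x^a y^{q^j}⟩ with 0 ≤ j < t. Then H has order q^{s-j}, and the left coset of H containing x^{m_0} y^{n_0} is { x^{m_0 + a α^{n_0} S(n)} y^{n_0 + n q^j} : n = 0, …, q^{s-j} − 1 }, where S(n) = (α^{n q^j} − 1)/(α^{q^j} − 1) mod p^r. -/
/-!
Exponents of `x` live in `ZMod (p ^ r)`. The relation `y x y⁻¹ = x ^ α` gives
`y ^ b x ^ m = x ^ (α ^ b m) y ^ b`, hence
`(x ^ m y ^ b) (x ^ a y ^ c) ^ k = x ^ (m + a α ^ b (1 + u + ⋯ + u ^ (k - 1))) y ^ (b + c k)`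
with `u = α ^ c`. For `c = q ^ j` with `j < t`, `u - 1` is a unit: otherwise `u ≡ 1 mod p`, so
`u ^ p ^ (r - 1) = 1`, while `u` has order a positive power of `q`. The geometric sum is then
`(u ^ k - 1) / (u - 1)`, which vanishes at `k = q ^ (s - j)`; and since `x` and `y` have coprime
orders, `x ^ m y ^ b = 1` forces `y ^ b = 1`, which shows that `x ^ a y ^ q ^ j` has order exactly
`q ^ (s - j)`.
-/

open Finset Subgroup

theorem ZMod.pow_prime_pow_eq_one_of_not_isUnit_sub_one {p r : ℕ} (hp : p.Prime) (hr : 0 < r)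
    {u : ZMod (p ^ r)} (hu : ¬IsUnit (u - 1)) : u ^ p ^ (r - 1) = 1 := by
  have : NeZero (p ^ r) := ⟨pow_ne_zero r hp.ne_zero⟩
  have hdvd : (p : ZMod (p ^ r)) ∣ u - 1 := by
    rw [← ZMod.natCast_zmod_val (u - 1), isUnit_natCast_iff_not_dvd_pow hp hr, not_not] at hu
    rw [← ZMod.natCast_zmod_val (u - 1)]
    exact Nat.cast_dvd_cast hu
  have := dvd_sub_pow_of_dvd_sub hdvd (r - 1)
  rwa [Nat.sub_add_cancel hr, one_pow, ← Nat.cast_pow, ZMod.natCast_self, zero_dvd_iff,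
    sub_eq_zero] at this

theorem ZMod.isUnit_sub_one_of_orderOf_eq_pow {p q r k : ℕ} (hp : p.Prime) (hq : q.Prime)
    (hpq : p ≠ q) (hr : 0 < r) (hk : k ≠ 0) {u : (ZMod (p ^ r))ˣ} (hu : orderOf u = q ^ k) :
    IsUnit ((u : ZMod (p ^ r)) - 1) := by
  by_contra h
  have hpow : u ^ p ^ (r - 1) = 1 :=
    Units.ext (by push_cast; exact pow_prime_pow_eq_one_of_not_isUnit_sub_one hp hr h)
  have : q ∣ p ^ (r - 1) := (dvd_pow_self q hk).trans (hu ▸ orderOf_dvd_of_pow_eq_one hpow)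
  exact hpq ((Nat.prime_dvd_prime_iff_eq hq hp).mp (hq.dvd_of_dvd_pow this)).symm

theorem ZMod.geom_sum_eq {n : ℕ} {u : ZMod n} (hu : IsUnit (u - 1)) (k : ℕ) :
    ∑ i ∈ range k, u ^ i = (u ^ k - 1) * (u - 1)⁻¹ := by
  rw [← geom_sum_mul, mul_assoc, ZMod.mul_inv_of_unit _ hu, mul_one]

theorem image_mul_zpowers_eq {G : Type*} [Group G] (g : G) {z : G} (hz : IsOfFinOrder z) :
    (g * ·) '' (zpowers z : Set G) = {h | ∃ k < orderOf z, h = g * z ^ k} := by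
  classical
  ext h
  simp [hz.mem_zpowers_iff_mem_range_orderOf, eq_inv_mul_iff_mul_eq, eq_comm]

theorem eq_one_of_mul_eq_one_of_coprime_orderOf {G : Type*} [Group G] {a b : G}
    (h : (orderOf a).Coprime (orderOf b)) (hab : a * b = 1) : b = 1 := by
  have hb : b = a⁻¹ := eq_inv_of_mul_eq_one_right hab
  rw [hb, orderOf_inv, Nat.coprime_self, orderOf_eq_one_iff] at h
  rw [hb, h, inv_one]

section Metacyclic

variable {G : Type*} [Group G] {x y : G} {n : ℕ}

theorem pow_val_natCast (hx : orderOf x = n) (m : ℕ) : x ^ (m : ZMod n).val = x ^ m := by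
  rw [ZMod.val_natCast, ← hx, pow_mod_orderOf]

theorem pow_val_pow_val (hx : orderOf x = n) (a b : ZMod n) :
    (x ^ a.val) ^ b.val = x ^ (a * b).val := by
  subst hx
  rw [ZMod.val_mul, pow_mod_orderOf, pow_mul]

theorem pow_val_add [NeZero n] (hx : orderOf x = n) (a b : ZMod n) :
    x ^ (a + b).val = x ^ a.val * x ^ b.val := by
  subst hx
  rw [ZMod.val_add, pow_mod_orderOf, pow_add]

variable {A : ZMod n} (hx : orderOf x = n) (hcomm : y * x * y⁻¹ = x ^ A.val)
include hx hcomm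

theorem mul_pow_val_eq_of_conj (m : ZMod n) : y * x ^ m.val = x ^ (A * m).val * y := by
  rw [← pow_val_pow_val hx, ← hcomm, conj_pow]
  group

theorem pow_mul_pow_val_eq_of_conj (k : ℕ) (m : ZMod n) :
    y ^ k * x ^ m.val = x ^ (A ^ k * m).val * y ^ k := by
  induction k generalizing m with
  | zero => simp
  | succ k ih =>
    rw [pow_succ, mul_assoc, mul_pow_val_eq_of_conj hx hcomm, ← mul_assoc, ih, mul_assoc,
      pow_succ, mul_assoc]

theorem pow_val_mul_pow_mul_pow_eq [NeZero n] (m a : ZMod n) (b c k : ℕ) :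
    (x ^ m.val * y ^ b) * (x ^ a.val * y ^ c) ^ k =
      x ^ (m + a * A ^ b * ∑ i ∈ range k, (A ^ c) ^ i).val * y ^ (b + c * k) := by
  induction k with
  | zero => simp
  | succ k ih =>
    set M := m + a * A ^ b * ∑ i ∈ range k, (A ^ c) ^ i
    calc (x ^ m.val * y ^ b) * (x ^ a.val * y ^ c) ^ (k + 1)
        = x ^ M.val * (y ^ (b + c * k) * x ^ a.val) * y ^ c := by
          rw [pow_succ, ← mul_assoc, ih, mul_assoc, mul_assoc, mul_assoc]
      _ = x ^ (M + A ^ (b + c * k) * a).val * y ^ (b + c * (k + 1)) := by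
          rw [pow_mul_pow_val_eq_of_conj hx hcomm, pow_val_add hx M, mul_add, mul_one,
            ← add_assoc, pow_add y _ c]
          simp only [mul_assoc]
      _ = _ := by
          rw [sum_range_succ, pow_add, pow_mul]
          congr 3
          ring

theorem orderOf_pow_val_mul_pow [NeZero n] {c N : ℕ} (hc : c ≠ 0) (hy : orderOf y = c * N)
    (hcop : n.Coprime (c * N)) (hu : IsUnit (A ^ c - 1)) (hN : (A ^ c) ^ N = 1) (a : ZMod n) :
    orderOf (x ^ a.val * y ^ c) = N := by
  have hpow (k : ℕ) :
      (x ^ a.val * y ^ c) ^ k = x ^ (a * ∑ i ∈ range k, (A ^ c) ^ i).val * y ^ (c * k) := by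
    simpa using pow_val_mul_pow_mul_pow_eq hx hcomm 0 a 0 c k
  apply Nat.dvd_antisymm
  · apply orderOf_dvd_of_pow_eq_one
    rw [hpow, ZMod.geom_sum_eq hu, hN, sub_self, zero_mul, mul_zero, ZMod.val_zero, pow_zero,
      one_mul, ← hy, pow_orderOf_eq_one]
  · have h := pow_orderOf_eq_one (x ^ a.val * y ^ c)
    rw [hpow] at h
    have hy1 : y ^ (c * orderOf (x ^ a.val * y ^ c)) = 1 := by
      refine eq_one_of_mul_eq_one_of_coprime_orderOf ?_ h
      rw [← hx, ← hy] at hcop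
      exact (hcop.coprime_dvd_left (orderOf_pow_dvd _)).coprime_dvd_right (orderOf_pow_dvd _)
    have := hy ▸ orderOf_dvd_of_pow_eq_one hy1
    exact Nat.dvd_of_mul_dvd_mul_left (Nat.pos_of_ne_zero hc) this

end Metacyclic

theorem stmt_14_general (p q r s t : ℕ) (hp : p.Prime) (hq : q.Prime) (hpq : p ≠ q)
    (hr : 0 < r) (hts : t ≤ s)
    (G : Type*) [Group G] (x y : G)
    (α : (ZMod (p ^ r))ˣ) (hα : orderOf α = q ^ t)
    (hx : orderOf x = p ^ r) (hy : orderOf y = q ^ s)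
    (hcomm : y * x * y⁻¹ = x ^ ((α : ZMod (p ^ r)).val)) :
    ∀ a j : ℕ, j < t →
      Nat.card (Subgroup.zpowers (x ^ a * y ^ q ^ j)) = q ^ (s - j) ∧
      ∀ m0 n0 : ℕ,
        ((x ^ m0 * y ^ n0) * ·) '' ((Subgroup.zpowers (x ^ a * y ^ q ^ j) : Subgroup G) : Set G) =
          {g : G | ∃ n < q ^ (s - j),
            g = x ^ (((m0 : ZMod (p ^ r)) + a * (α : ZMod (p ^ r)) ^ n0 *
              (((α : ZMod (p ^ r)) ^ (n * q ^ j) - 1) * ((α : ZMod (p ^ r)) ^ q ^ j - 1)⁻¹)).val) *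
              y ^ (n0 + n * q ^ j)} := by
  intro a j hj
  have : NeZero (p ^ r) := ⟨pow_ne_zero r hp.ne_zero⟩
  have hqs : q ^ j * q ^ (s - j) = q ^ s := by
    rw [← pow_add, Nat.add_sub_cancel' (hj.le.trans hts)]
  have hunit : IsUnit ((α : ZMod (p ^ r)) ^ q ^ j - 1) := by
    have hord : orderOf (α ^ q ^ j) = q ^ (t - j) := by
      rw [orderOf_pow_of_dvd (pow_ne_zero j hq.ne_zero) (hα ▸ pow_dvd_pow q hj.le), hα,
        Nat.pow_div hj.le hq.pos]
    simpa using ZMod.isUnit_sub_one_of_orderOf_eq_pow hp hq hpq hr (Nat.sub_ne_zero_of_lt hj) hord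
  have hperiod : ((α : ZMod (p ^ r)) ^ q ^ j) ^ q ^ (s - j) = 1 := by
    have hαs : α ^ q ^ s = 1 := orderOf_dvd_iff_pow_eq_one.mp (hα ▸ pow_dvd_pow q hts)
    rw [← pow_mul, hqs, ← Units.val_pow_eq_pow_val, hαs, Units.val_one]
  have hz : x ^ a * y ^ q ^ j = x ^ (a : ZMod (p ^ r)).val * y ^ q ^ j := by
    rw [pow_val_natCast hx]
  have hord : orderOf (x ^ a * y ^ q ^ j) = q ^ (s - j) := by
    rw [hz]
    exact orderOf_pow_val_mul_pow hx hcomm (pow_ne_zero j hq.ne_zero) (hy.trans hqs.symm)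
      (hqs ▸ Nat.Coprime.pow r s ((Nat.coprime_primes hp hq).mpr hpq)) hunit hperiod _
  refine ⟨by rw [Nat.card_zpowers, hord], fun m0 n0 => ?_⟩
  rw [image_mul_zpowers_eq _ (orderOf_pos_iff.mp (hord ▸ pow_pos hq.pos _)), hord, hz,
    ← pow_val_natCast hx m0]
  simp only [pow_val_mul_pow_mul_pow_eq hx hcomm, ZMod.geom_sum_eq hunit]
  simp only [← pow_mul, mul_comm (q ^ j)]

theorem stmt_14 (p q r s t : ℕ) (hp : p.Prime) (hq : q.Prime) (hpq : p ≠ q)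
    (hpodd : Odd p) (hqodd : Odd q)
    (hr : 0 < r) (hs : 0 < s) (ht : 1 ≤ t) (hts : t ≤ s)
    (G : Type*) [Group G] (x y : G)
    (α : (ZMod (p ^ r))ˣ) (hα : orderOf α = q ^ t)
    (hx : orderOf x = p ^ r) (hy : orderOf y = q ^ s)
    (hcomm : y * x * y⁻¹ = x ^ ((α : ZMod (p ^ r)).val))
    (hgen : Subgroup.closure {x, y} = ⊤)
    (hcard : Nat.card G = p ^ r * q ^ s) :
    ∀ a j : ℕ, j < t →
      Nat.card (Subgroup.zpowers (x ^ a * y ^ q ^ j)) = q ^ (s - j) ∧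
      ∀ m0 n0 : ℕ,
        ((x ^ m0 * y ^ n0) * ·) '' ((Subgroup.zpowers (x ^ a * y ^ q ^ j) : Subgroup G) : Set G) =
          {g : G | ∃ n < q ^ (s - j),
            g = x ^ (((m0 : ZMod (p ^ r)) + a * (α : ZMod (p ^ r)) ^ n0 *
              (((α : ZMod (p ^ r)) ^ (n * q ^ j) - 1) * ((α : ZMod (p ^ r)) ^ q ^ j - 1)⁻¹)).val) *
              y ^ (n0 + n * q ^ j)} :=
  stmt_14_general p q r s t hp hq hpq hr hts G x y α hα hx hy hcomm
end

section
/- Let G = Z_{p^r} ⋊_α Z_{q^s} with ord(α) = q^t, and suppose H = ⟨x^a y^{q^j}⟩ with 0 ≤ j < t hidden. For g_1, g_2 ∈ G with g_2^{-1} g_1 = x^u y^v ∈ H and q^t ∤ v, the parameter a is recovered as a ≡ u (α^{q^j} − 1)/(α^v − 1) (mod p^r). -/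
/-!
Write `α` also for `(α : ZMod (p ^ r)).val`. Since `y x y⁻¹ = x ^ α`,
`(x ^ a * y ^ b) ^ k = x ^ (a * (1 + α ^ b + ⋯ + α ^ (b * (k - 1)))) * y ^ (b * k)`,
and since the orders of `x` and `y` are coprime, `x ^ u * y ^ v` determines `x ^ u` and `y ^ v`.
Hence `x ^ u * y ^ v = (x ^ a * y ^ q ^ j) ^ k` gives
`u * (α ^ q ^ j - 1) = a * (α ^ (q ^ j * k) - 1)` in `ZMod (p ^ r)`, and
`α ^ (q ^ j * k) = α ^ v` because `q ^ t ∣ q ^ s`. It remains to divide by `α ^ v - 1`: if it were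
not a unit it would be nilpotent, and `β = 1 + nilpotent` with `β ^ n = 1` for an invertible `n`
(here a power of `q`) forces `β = 1`, contradicting `q ^ t ∤ v`.
-/

open Finset

theorem eq_one_of_pow_eq_one_of_isNilpotent_sub_one {R : Type*} [CommRing R] {β : R} {n : ℕ}
    (hn : IsUnit (n : R)) (hβn : β ^ n = 1) (hβ : IsNilpotent (β - 1)) : β = 1 := by
  obtain ⟨c, hc⟩ : β - 1 ∣ ∑ i ∈ range n, β ^ i - n := by
    have := dvd_sum fun i (_ : i ∈ range n) ↦ sub_dvd_pow_sub_pow β 1 i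
    simpa only [sum_sub_distrib, sum_const, card_range, nsmul_one, one_pow] using this
  have hsum : IsUnit (∑ i ∈ range n, β ^ i) := by
    rw [← sub_add_cancel (∑ i ∈ range n, β ^ i) n, hc, add_comm]
    exact (Commute.isNilpotent_mul_right (Commute.all _ _) hβ).isUnit_add_left_of_commute hn
      (Commute.all _ _)
  have := geom_sum_mul β n
  rw [hβn, sub_self] at this
  exact sub_eq_zero.mp (hsum.mul_right_eq_zero.mp this)

namespace ZMod

theorem isNilpotent_of_not_isUnit {p r : ℕ} (hp : p.Prime) {c : ZMod (p ^ r)} (hc : ¬IsUnit c) :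
    IsNilpotent c := by
  have : NeZero (p ^ r) := ⟨pow_ne_zero r hp.ne_zero⟩
  have hpc : p ∣ c.val := by
    by_contra h
    rw [← natCast_zmod_val c, isUnit_iff_coprime] at hc
    exact hc ((hp.coprime_iff_not_dvd.mpr h).pow_left r).symm
  refine ⟨r, ?_⟩
  rw [← natCast_zmod_val c, ← Nat.cast_pow, natCast_eq_zero_iff]
  exact pow_dvd_pow_of_dvd hpc r

theorem isUnit_sub_one_of_coprime_orderOf {p r : ℕ} (hp : p.Prime) {β : (ZMod (p ^ r))ˣ}
    (hβ : (orderOf β).Coprime p) (hβ1 : β ≠ 1) : IsUnit ((β : ZMod (p ^ r)) - 1) := by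
  by_contra h
  refine hβ1 (Units.ext (eq_one_of_pow_eq_one_of_isNilpotent_sub_one (n := orderOf β) ?_ ?_
    (isNilpotent_of_not_isUnit hp h)))
  · exact (isUnit_iff_coprime _ _).mpr (hβ.pow_right r)
  · rw [← Units.val_pow_eq_pow_val, pow_orderOf_eq_one, Units.val_one]

end ZMod

section Semidirect

variable {G : Type*} [Group G] {x y : G} {w : ℕ}

theorem semiconjBy_pow_pow_of_conj (hcomm : y * x * y⁻¹ = x ^ w) (e m : ℕ) :
    SemiconjBy (y ^ e) (x ^ m) (x ^ (m * w ^ e)) := by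
  induction e generalizing m with
  | zero => simp
  | succ e ih =>
    have hy : SemiconjBy y (x ^ m) (x ^ (m * w)) := by
      rw [mul_comm, pow_mul]
      exact SemiconjBy.pow_right (mul_inv_eq_iff_eq_mul.mp hcomm) m
    rw [pow_succ, pow_succ', ← mul_assoc]
    exact (ih (m * w)).mul_left hy

theorem pow_mul_pow_pow_of_conj (hcomm : y * x * y⁻¹ = x ^ w) (a b k : ℕ) :
    (x ^ a * y ^ b) ^ k = x ^ (a * ∑ i ∈ range k, (w ^ b) ^ i) * y ^ (b * k) := by
  induction k with
  | zero => simp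
  | succ k ih =>
    set c := a * ∑ i ∈ range k, (w ^ b) ^ i
    calc (x ^ a * y ^ b) ^ (k + 1) = x ^ a * (y ^ b * x ^ c) * y ^ (b * k) := by
          rw [pow_succ', ih]; group
      _ = x ^ a * (x ^ (c * w ^ b) * y ^ b) * y ^ (b * k) := by
          rw [(semiconjBy_pow_pow_of_conj hcomm b c).eq]
      _ = x ^ (a * ∑ i ∈ range (k + 1), (w ^ b) ^ i) * y ^ (b * (k + 1)) := by
          have hexp : a * (w ^ b * ∑ i ∈ range k, (w ^ b) ^ i + 1) = a + c * w ^ b := by ring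
          rw [geom_sum_succ, hexp, mul_add_one, pow_add, pow_add]
          group

theorem isOfFinOrder_pow_mul_pow_of_conj (hcomm : y * x * y⁻¹ = x ^ w) (hx : IsOfFinOrder x)
    (hy : IsOfFinOrder y) (a b : ℕ) : IsOfFinOrder (x ^ a * y ^ b) := by
  refine IsOfFinOrder.of_pow (n := orderOf y) ?_ hy.orderOf_pos.ne'
  rw [pow_mul_pow_pow_of_conj hcomm, pow_mul' y b, pow_orderOf_eq_one, one_pow, mul_one]
  exact hx.pow

theorem pow_eq_pow_and_pow_eq_pow_of_coprime (hxy : (orderOf x).Coprime (orderOf y))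
    {m m' n n' : ℕ} (h : x ^ m * y ^ n = x ^ m' * y ^ n') : x ^ m = x ^ m' ∧ y ^ n = y ^ n' := by
  have hdisj : Disjoint (Subgroup.zpowers x) (Subgroup.zpowers y) :=
    Subgroup.disjoint_of_coprime_natCard (by simpa only [Nat.card_zpowers] using hxy)
  have := Subgroup.mul_injective_of_disjoint hdisj
    (a₁ := (⟨x ^ m, Subgroup.npow_mem_zpowers x m⟩, ⟨y ^ n, Subgroup.npow_mem_zpowers y n⟩))
    (a₂ := (⟨x ^ m', Subgroup.npow_mem_zpowers x m'⟩, ⟨y ^ n', Subgroup.npow_mem_zpowers y n'⟩))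
    h
  simpa using this

end Semidirect

theorem stmt_17_general (p q r s t : ℕ) (hp : p.Prime) (hq : q.Prime) (hpq : p ≠ q)
    (hts : t ≤ s)
    (G : Type*) [Group G] (x y : G)
    (α : (ZMod (p ^ r))ˣ) (hα : orderOf α = q ^ t)
    (hx : orderOf x = p ^ r) (hy : orderOf y = q ^ s)
    (hcomm : y * x * y⁻¹ = x ^ ((α : ZMod (p ^ r)).val)) :
    ∀ a u v j : ℕ, j < t → ¬ q ^ t ∣ v →
      x ^ u * y ^ v ∈ Subgroup.zpowers (x ^ a * y ^ q ^ j) →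
      (a : ZMod (p ^ r)) =
        (u : ZMod (p ^ r)) * (((α : ZMod (p ^ r)) ^ q ^ j - 1) * ((α : ZMod (p ^ r)) ^ v - 1)⁻¹) := by
  intro a u v j _ hv hmem
  have : NeZero (p ^ r) := ⟨pow_ne_zero r hp.ne_zero⟩
  have hpq' : p.Coprime q := (Nat.coprime_primes hp hq).mpr hpq
  have hxfin : IsOfFinOrder x := orderOf_ne_zero_iff.mp (hx ▸ pow_ne_zero r hp.ne_zero)
  have hyfin : IsOfFinOrder y := orderOf_ne_zero_iff.mp (hy ▸ pow_ne_zero s hq.ne_zero)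
  obtain ⟨k, hk⟩ : ∃ k : ℕ, (x ^ a * y ^ q ^ j) ^ k = x ^ u * y ^ v :=
    (isOfFinOrder_pow_mul_pow_of_conj hcomm hxfin hyfin a _).mem_powers_iff_mem_zpowers.mpr hmem
  rw [pow_mul_pow_pow_of_conj hcomm] at hk
  obtain ⟨hxu, hyv⟩ :=
    pow_eq_pow_and_pow_eq_pow_of_coprime (by rw [hx, hy]; exact hpq'.pow r s) hk
  set A : ZMod (p ^ r) := (α : ZMod (p ^ r))
  have hu : (u : ZMod (p ^ r)) = a * ∑ i ∈ range k, (A ^ q ^ j) ^ i := by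
    have := (ZMod.natCast_eq_natCast_iff _ _ _).mpr (pow_eq_pow_iff_modEq.mp hxu)
    rw [hx] at this
    simpa only [Nat.cast_mul, Nat.cast_sum, Nat.cast_pow, ZMod.natCast_zmod_val] using this.symm
  have hAv : A ^ (q ^ j * k) = A ^ v := by
    have hmod := (pow_eq_pow_iff_modEq.mp hyv).of_dvd (hy ▸ pow_dvd_pow q hts)
    rw [← hα, ← pow_eq_pow_iff_modEq] at hmod
    simpa using congrArg Units.val hmod
  have hunit : IsUnit (A ^ v - 1) := by
    have hcop : (orderOf (α ^ v)).Coprime p :=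
      Nat.Coprime.coprime_dvd_left (hα ▸ orderOf_pow_dvd v) (hpq'.pow_right t).symm
    have hne : α ^ v ≠ 1 := fun h ↦ hv (hα ▸ orderOf_dvd_of_pow_eq_one h)
    simpa using ZMod.isUnit_sub_one_of_coprime_orderOf hp hcop hne
  have hmain : (u : ZMod (p ^ r)) * (A ^ q ^ j - 1) = a * (A ^ v - 1) := by
    rw [hu, mul_assoc, geom_sum_mul, ← pow_mul, hAv]
  calc (a : ZMod (p ^ r)) = a * (A ^ v - 1) * (A ^ v - 1)⁻¹ := by
        rw [mul_assoc, ZMod.mul_inv_of_unit _ hunit, mul_one]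
    _ = u * ((A ^ q ^ j - 1) * (A ^ v - 1)⁻¹) := by rw [← hmain, mul_assoc]

theorem stmt_17 (p q r s t : ℕ) (hp : p.Prime) (hq : q.Prime) (hpq : p ≠ q)
    (hpodd : Odd p) (hqodd : Odd q)
    (hr : 0 < r) (hs : 0 < s) (ht : 1 ≤ t) (hts : t ≤ s)
    (G : Type*) [Group G] (x y : G)
    (α : (ZMod (p ^ r))ˣ) (hα : orderOf α = q ^ t)
    (hx : orderOf x = p ^ r) (hy : orderOf y = q ^ s)
    (hcomm : y * x * y⁻¹ = x ^ ((α : ZMod (p ^ r)).val))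
    (hgen : Subgroup.closure {x, y} = ⊤)
    (hcard : Nat.card G = p ^ r * q ^ s) :
    ∀ a u v j : ℕ, j < t → ¬ q ^ t ∣ v →
      x ^ u * y ^ v ∈ Subgroup.zpowers (x ^ a * y ^ q ^ j) →
      (a : ZMod (p ^ r)) =
        (u : ZMod (p ^ r)) * (((α : ZMod (p ^ r)) ^ q ^ j - 1) * ((α : ZMod (p ^ r)) ^ v - 1)⁻¹) :=
  stmt_17_general p q r s t hp hq hpq hts G x y α hα hx hy hcomm
end
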